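/- arXiv:1305.1598 — 3 statements merged into one kernel-verified Lean document; each statement's English description precedes it below -/
import Mathlib

section
/- Let p be a prime, r a positive integer, and w_1, …, w_r ≥ 0 with Σ_s w_s = 1. Let r̃ = max{s : w_s ≠ 0}. For r − r̃ ≤ θ ≤ r define ω_θ = (Σ_{s=1}^r (θ+s−r)^+ w_s) / (Σ_{s=1}^r s w_s), where x^+ = max(x,0). Then 1 − ω_θ ≥ (r−θ)/r̃. -/
/-!
Writing `a = r - θ`, the summand `s - (θ + s - r)⁺` of the numerator of `1 - ω_θ` equals `min a s`.
Since `0 ≤ a ≤ r̃` and every `s` carrying weight satisfies `s ≤ r̃`, we have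
`min a s ≥ (a / r̃) s`, and summing against the weights gives `1 - ω_θ ≥ a / r̃`.
-/

lemma sub_max_sub_zero (a x : ℝ) : x - max (x - a) 0 = min a x := by
  rcases le_total a x with h | h
  · rw [max_eq_left (by linarith), min_eq_left h]; ring
  · rw [max_eq_right (by linarith), min_eq_right h]; ring

lemma div_mul_le_min {a c x : ℝ} (ha : 0 ≤ a) (hac : a ≤ c) (hx : 0 ≤ x) (hxc : x ≤ c) :
    a / c * x ≤ min a x := by
  have hc : 0 ≤ c := ha.trans hac
  refine le_min ?_ (mul_le_of_le_one_left hx (div_le_one_of_le₀ hac hc))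
  rw [div_mul_comm]
  exact mul_le_of_le_one_left ha (div_le_one_of_le₀ hxc hc)

lemma div_mul_sum_le_sum_sub_sum_max {ι : Type*} (s : Finset ι) (w x : ι → ℝ) {a c : ℝ}
    (ha : 0 ≤ a) (hac : a ≤ c) (hw : ∀ i ∈ s, 0 ≤ w i) (hx : ∀ i ∈ s, 0 ≤ x i)
    (hxc : ∀ i ∈ s, w i ≠ 0 → x i ≤ c) :
    a / c * ∑ i ∈ s, x i * w i ≤ ∑ i ∈ s, x i * w i - ∑ i ∈ s, max (x i - a) 0 * w i := by
  rw [← Finset.sum_sub_distrib, Finset.mul_sum]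
  refine Finset.sum_le_sum fun i hi => ?_
  rcases eq_or_ne (w i) 0 with h0 | h0
  · simp [h0]
  rw [← sub_mul, sub_max_sub_zero, ← mul_assoc]
  exact mul_le_mul_of_nonneg_right (div_mul_le_min ha hac (hx i hi) (hxc i hi h0)) (hw i hi)

lemma le_one_sub_div_of_mul_le {q N D : ℝ} (hq : q ≤ 1) (hD : 0 ≤ D) (h : q * D ≤ D - N) :
    q ≤ 1 - N / D := by
  rcases hD.eq_or_lt' with rfl | hD
  · simpa using hq
  rwa [one_sub_div hD.ne', le_div_iff₀ hD]

theorem stmt_11_general (r : ℕ)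
    (w : ℕ → ℝ) (hw0 : ∀ s, 0 ≤ w s)
    (rt : ℕ)
    (hmax : ∀ s ∈ Finset.Icc 1 r, rt < s → w s = 0)
    (θ : ℕ) (hθl : r - rt ≤ θ) (hθr : θ ≤ r) :
    1 - (∑ s ∈ Finset.Icc 1 r, max ((θ : ℝ) + (s : ℝ) - (r : ℝ)) 0 * w s) /
          (∑ s ∈ Finset.Icc 1 r, (s : ℝ) * w s) ≥ ((r : ℝ) - (θ : ℝ)) / (rt : ℝ) := by
  have ha : (0 : ℝ) ≤ r - θ := sub_nonneg.mpr (by exact_mod_cast hθr)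
  have hac : (r : ℝ) - θ ≤ rt := by
    rw [sub_le_iff_le_add]; exact_mod_cast Nat.sub_le_iff_le_add'.mp hθl
  have hsupp : ∀ s ∈ Finset.Icc 1 r, w s ≠ 0 → (s : ℝ) ≤ rt := fun s hs h0 => by
    exact_mod_cast not_lt.mp fun hlt => h0 (hmax s hs hlt)
  have key := div_mul_sum_le_sum_sub_sum_max _ w (fun s : ℕ => (s : ℝ)) ha hac
    (fun s _ => hw0 s) (fun s _ => s.cast_nonneg) hsupp
  simp only [sub_sub_eq_add_sub, add_comm _ (θ : ℝ)] at key
  exact le_one_sub_div_of_mul_le (div_le_one_of_le₀ hac (by positivity))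
    (Finset.sum_nonneg fun s _ => mul_nonneg s.cast_nonneg (hw0 s)) key

theorem stmt_11 (p r : ℕ) (hp : p.Prime) (hr : 0 < r)
    (w : ℕ → ℝ) (hw0 : ∀ s, 0 ≤ w s) (hsum : ∑ s ∈ Finset.Icc 1 r, w s = 1)
    (rt : ℕ) (hrt1 : 1 ≤ rt) (hrtr : rt ≤ r) (hwrt : w rt ≠ 0)
    (hmax : ∀ s ∈ Finset.Icc 1 r, rt < s → w s = 0)
    (θ : ℕ) (hθl : r - rt ≤ θ) (hθr : θ ≤ r) :
    1 - (∑ s ∈ Finset.Icc 1 r, max ((θ : ℝ) + (s : ℝ) - (r : ℝ)) 0 * w s) /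
          (∑ s ∈ Finset.Icc 1 r, (s : ℝ) * w s) ≥ ((r : ℝ) - (θ : ℝ)) / (rt : ℝ) :=
  stmt_11_general r w hw0 rt hmax θ hθl hθr
end

section
/- Let p be a prime, r and k positive integers, and w_1,…,w_r nonnegative reals summing to 1 with k·w_s integers. Let J = ⊕_{s=1}^{r} ℤ_{p^s}^{k w_s}. For a ∈ J and 0 ≤ θ < r, let T_θ(a) be the set of ã ∈ J such that min over all coordinates (s,l) of (r − s)^+ + θ̂_{s,l} equals θ, where θ̂_{s,l} is the largest exponent with ã_{s,l} − a_{s,l} ∈ p^{θ̂_{s,l}}ℤ_{p^s}. Then |T_θ(a)| = (∏_{s=1}^{r} min(p^{r−θ}, p^s)^{k w_s}) − (∏_{s=1}^{r} min(p^{r−θ−1}, p^s)^{k w_s}). -/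
/-!
Write `T_θ(a)` as the set of `ã` all of whose levels `(r - s) + θ̂_{s,l}` are at least `θ`, minus
the set of those whose levels are all at least `θ + 1`. Both are boxes: the level of coordinate
`(s, l)` is at least `n` exactly when `ã_{s,l} - a_{s,l}` lies in the subgroup
`p^{n - (r - s)} ℤ_{p^s}`, which has `min (p^{r - n}) (p^s)` elements.
-/

/-- The largest exponent `t ≤ s` such that `x` is a multiple of `p^t` in `ℤ_{p^s}`. -/
noncomputable def expOf (p s : ℕ) (x : ZMod (p ^ s)) : ℕ :=
  sSup {t | t ≤ s ∧ ∃ c : ZMod (p ^ s), x = (p : ZMod (p ^ s)) ^ t * c}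

theorem Nat.sInf_eq_iff {S : Set ℕ} (hS : S.Nonempty) {θ : ℕ} :
    sInf S = θ ↔ θ ∈ lowerBounds S ∧ θ + 1 ∉ lowerBounds S := by
  constructor
  · rintro rfl
    exact ⟨fun v hv => Nat.sInf_le hv, fun h => (h (Nat.sInf_mem hS)).not_gt (Nat.lt_succ_self _)⟩
  · rintro ⟨hθ, hθ₁⟩
    obtain ⟨v, hv, hvθ⟩ : ∃ v ∈ S, v < θ + 1 := by simpa [mem_lowerBounds] using hθ₁
    have hθv : θ = v := le_antisymm (hθ hv) (Nat.lt_succ_iff.mp hvθ)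
    exact IsLeast.csInf_eq ⟨hθv ▸ hv, hθ⟩

theorem Nat.card_sInf_eq {α : Type*} [Finite α] (F : α → Set ℕ) (hF : ∀ x, (F x).Nonempty)
    (θ : ℕ) :
    Nat.card {x // sInf (F x) = θ} =
      Nat.card {x // θ ∈ lowerBounds (F x)} - Nat.card {x // θ + 1 ∈ lowerBounds (F x)} := by
  have hsub : {x | θ + 1 ∈ lowerBounds (F x)} ⊆ {x | θ ∈ lowerBounds (F x)} :=
    fun x hx v hv => (Nat.le_succ θ).trans (hx hv)
  have hdiff : {x | sInf (F x) = θ} =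
      {x | θ ∈ lowerBounds (F x)} \ {x | θ + 1 ∈ lowerBounds (F x)} := by
    ext x
    exact Nat.sInf_eq_iff (hF x)
  have hcard (P : α → Prop) : Nat.card {x // P x} = {x | P x}.ncard := Nat.card_coe_set_eq _
  rw [hcard, hcard, hcard, hdiff, Set.ncard_sdiff hsub]

theorem Nat.card_subtype_forall_pi {ι : Type*} [Fintype ι] {β : ι → Type*}
    (P : ∀ i, β i → Prop) :
    Nat.card {f : ∀ i, β i // ∀ i, P i (f i)} = ∏ i, Nat.card {b // P i b} :=
  (Nat.card_congr Equiv.subtypePiEquivPi).trans Nat.card_pi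

theorem ZMod.exists_eq_mul_iff_mem_zmultiples {n : ℕ} (a x : ZMod n) :
    (∃ c, x = a * c) ↔ x ∈ AddSubgroup.zmultiples a := by
  rw [AddSubgroup.mem_zmultiples_iff]
  constructor
  · rintro ⟨c, rfl⟩
    exact ⟨c.cast, by rw [zsmul_eq_mul, ZMod.intCast_zmod_cast, mul_comm]⟩
  · rintro ⟨k, rfl⟩
    exact ⟨k, by rw [zsmul_eq_mul, mul_comm]⟩

theorem ZMod.card_zmultiples_prime_pow {p s t : ℕ} (hp : 0 < p) (hts : t ≤ s) :
    Nat.card (AddSubgroup.zmultiples ((p : ZMod (p ^ s)) ^ t)) = p ^ (s - t) := by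
  rw [Nat.card_zmultiples, ← Nat.cast_pow, ZMod.addOrderOf_coe _ (pow_pos hp s).ne',
    Nat.gcd_eq_right (pow_dvd_pow p hts), Nat.pow_div hts hp]

theorem le_expOf_iff {p s t : ℕ} (x : ZMod (p ^ s)) :
    t ≤ expOf p s x ↔ t ≤ s ∧ ∃ c : ZMod (p ^ s), x = (p : ZMod (p ^ s)) ^ t * c := by
  unfold expOf
  set E := {t | t ≤ s ∧ ∃ c : ZMod (p ^ s), x = (p : ZMod (p ^ s)) ^ t * c}
  have hbdd : BddAbove E := ⟨s, fun u hu => hu.1⟩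
  refine ⟨fun ht => ?_, fun hmem => le_csSup hbdd hmem⟩
  obtain ⟨hle, c, hc⟩ : sSup E ∈ E := Nat.sSup_mem ⟨0, Nat.zero_le _, x, by simp⟩ hbdd
  refine ⟨ht.trans hle, (p : ZMod (p ^ s)) ^ (sSup E - t) * c, ?_⟩
  rw [hc, ← mul_assoc, ← pow_add, Nat.add_sub_cancel' ht]

theorem card_le_expOf_sub {p s t : ℕ} (hp : 0 < p) (hts : t ≤ s) (a : ZMod (p ^ s)) :
    Nat.card {x : ZMod (p ^ s) // t ≤ expOf p s (x - a)} = p ^ (s - t) := by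
  calc Nat.card {x : ZMod (p ^ s) // t ≤ expOf p s (x - a)}
      = Nat.card {y : ZMod (p ^ s) // t ≤ expOf p s y} :=
        Nat.card_congr (Equiv.subtypeEquiv (Equiv.subRight a) fun _ => Iff.rfl)
    _ = Nat.card (AddSubgroup.zmultiples ((p : ZMod (p ^ s)) ^ t)) :=
        Nat.card_congr <| Equiv.subtypeEquivRight fun y => by
          rw [le_expOf_iff, ZMod.exists_eq_mul_iff_mem_zmultiples, and_iff_right hts]
    _ = p ^ (s - t) := ZMod.card_zmultiples_prime_pow hp hts

theorem card_le_sub_add_expOf_sub {p r s n : ℕ} (hp : 0 < p) (hs : s ≤ r) (hn : n ≤ r)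
    (a : ZMod (p ^ s)) :
    Nat.card {x : ZMod (p ^ s) // n ≤ (r - s) + expOf p s (x - a)} = min (p ^ (r - n)) (p ^ s) := by
  have hiff (x : ZMod (p ^ s)) :
      n ≤ (r - s) + expOf p s (x - a) ↔ n - (r - s) ≤ expOf p s (x - a) := by omega
  rw [Nat.card_congr (Equiv.subtypeEquivRight hiff), card_le_expOf_sub hp (by omega),
    ← (pow_right_monotone hp).map_min]
  congr 1
  omega

theorem card_forall_le_sub_add_expOf_sub {p r n : ℕ} (hp : 0 < p) (hn : n ≤ r) (m : ℕ → ℕ)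
    (a : (s : Finset.Icc 1 r) → Fin (m s.1) → ZMod (p ^ s.1)) :
    Nat.card {x : (s : Finset.Icc 1 r) → Fin (m s.1) → ZMod (p ^ s.1) //
      ∀ s l, n ≤ (r - s.1) + expOf p s.1 (x s l - a s l)} =
      ∏ s ∈ Finset.Icc 1 r, min (p ^ (r - n)) (p ^ s) ^ m s := by
  rw [Nat.card_subtype_forall_pi fun s (g : Fin (m s.1) → ZMod (p ^ s.1)) =>
    ∀ l, n ≤ (r - s.1) + expOf p s.1 (g l - a s l), ← Finset.prod_coe_sort (Finset.Icc 1 r)]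
  refine Finset.prod_congr rfl fun s _ => ?_
  have hs : s.1 ≤ r := (Finset.mem_Icc.mp s.2).2
  rw [Nat.card_subtype_forall_pi fun l (y : ZMod (p ^ s.1)) =>
    n ≤ (r - s.1) + expOf p s.1 (y - a s l)]
  simp only [card_le_sub_add_expOf_sub hp hs hn, Finset.prod_const, Finset.card_univ,
    Fintype.card_fin]

theorem stmt_12_general (p r k : ℕ) (hp : p.Prime) (hk : 0 < k)
    (w : ℕ → ℝ) (hsum : ∑ s ∈ Finset.Icc 1 r, w s = 1)
    (m : ℕ → ℕ) (hm : ∀ s, (m s : ℝ) = (k : ℝ) * w s)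
    (θ : ℕ) (hθ : θ < r)
    (a : (s : Finset.Icc 1 r) → Fin (m s.1) → ZMod (p ^ s.1)) :
    Nat.card {at' : (s : Finset.Icc 1 r) → Fin (m s.1) → ZMod (p ^ s.1) //
        sInf {v : ℕ | ∃ (s : Finset.Icc 1 r) (l : Fin (m s.1)),
          v = (r - s.1) + expOf p s.1 (at' s l - a s l)} = θ} =
      (∏ s ∈ Finset.Icc 1 r, min (p ^ (r - θ)) (p ^ s) ^ m s) -
        (∏ s ∈ Finset.Icc 1 r, min (p ^ (r - θ - 1)) (p ^ s) ^ m s) := by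
  -- Some `m s` is positive, so no set of levels is empty (where `sInf ∅ = 0` would be junk).
  have hmsum : ∑ s ∈ Finset.Icc 1 r, (m s : ℝ) = k := by
    simp only [hm, ← Finset.mul_sum, hsum, mul_one]
  obtain ⟨s₀, hs₀, hms₀⟩ :=
    Finset.exists_ne_zero_of_sum_ne_zero (hmsum.trans_ne (Nat.cast_ne_zero.mpr hk.ne'))
  have hlevels (x : (s : Finset.Icc 1 r) → Fin (m s.1) → ZMod (p ^ s.1)) (n : ℕ) :
      n ∈ lowerBounds {v : ℕ | ∃ (s : Finset.Icc 1 r) (l : Fin (m s.1)),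
          v = (r - s.1) + expOf p s.1 (x s l - a s l)} ↔
        ∀ s l, n ≤ (r - s.1) + expOf p s.1 (x s l - a s l) :=
    ⟨fun h s l => h ⟨s, l, rfl⟩, by rintro h _ ⟨s, l, rfl⟩; exact h s l⟩
  have : NeZero p := ⟨hp.ne_zero⟩
  refine (Nat.card_sInf_eq _ (fun x => ?nonempty) θ).trans ?_
  case nonempty => exact ⟨_, ⟨s₀, hs₀⟩, ⟨0, Nat.pos_of_ne_zero (mod_cast hms₀)⟩, rfl⟩
  rw [Nat.card_congr (Equiv.subtypeEquivRight (hlevels · θ)),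
    Nat.card_congr (Equiv.subtypeEquivRight (hlevels · (θ + 1))),
    card_forall_le_sub_add_expOf_sub hp.pos hθ.le, card_forall_le_sub_add_expOf_sub hp.pos hθ,
    Nat.sub_sub]

theorem stmt_12 (p r k : ℕ) (hp : p.Prime) (hr : 0 < r) (hk : 0 < k)
    (w : ℕ → ℝ) (hw0 : ∀ s, 0 ≤ w s) (hsum : ∑ s ∈ Finset.Icc 1 r, w s = 1)
    (m : ℕ → ℕ) (hm : ∀ s, (m s : ℝ) = (k : ℝ) * w s)
    (θ : ℕ) (hθ : θ < r)
    (a : (s : Finset.Icc 1 r) → Fin (m s.1) → ZMod (p ^ s.1)) :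
    Nat.card {at' : (s : Finset.Icc 1 r) → Fin (m s.1) → ZMod (p ^ s.1) //
        sInf {v : ℕ | ∃ (s : Finset.Icc 1 r) (l : Fin (m s.1)),
          v = (r - s.1) + expOf p s.1 (at' s l - a s l)} = θ} =
      (∏ s ∈ Finset.Icc 1 r, min (p ^ (r - θ)) (p ^ s) ^ m s) -
        (∏ s ∈ Finset.Icc 1 r, min (p ^ (r - θ - 1)) (p ^ s) ^ m s) :=
  stmt_12_general p r k hp hk w hsum m hm θ hθ a
end

section
/- Let r be a positive integer and let I_0 ≥ I_1 ≥ ⋯ ≥ I_{r−1} ≥ 0 be reals (playing the role of I(X;Y|[X]_θ), which is nonincreasing in θ). Then max_{1 ≤ r̃ ≤ r} min_{r−r̃ ≤ θ ≤ r−1} (r̃/(r−θ))·I_θ = min_{0 ≤ θ ≤ r−1} (r/(r−θ))·I_θ. -/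
/-!
Taking `r̃ = r` shows that the max-min is at least the right-hand side. Conversely, fix `r̃`
and `θ₀`. If `θ₀ ≥ r - r̃`, the term at `θ₀` already has the smaller factor
`r̃ / (r - θ₀) ≤ r / (r - θ₀)`. Otherwise the term at `θ = r - r̃` has factor `1`, and
`I (r - r̃) ≤ I θ₀ ≤ r / (r - θ₀) * I θ₀` by monotonicity. Either way some term of the inner
minimum is below the `θ₀`-term of the right-hand side.
-/

lemma one_le_div_sub_of_lt {r θ : ℕ} (hθ : θ < r) : (1 : ℝ) ≤ r / ((r : ℝ) - θ) := by
  have hθ' : (θ : ℝ) < r := by exact_mod_cast hθ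
  rw [one_le_div (by linarith)]
  linarith [(θ.cast_nonneg : (0 : ℝ) ≤ θ)]

lemma exists_mem_Icc_div_sub_mul_le {r rt θ₀ : ℕ} {I : ℕ → ℝ}
    (hmono : ∀ θ θ' : ℕ, θ ≤ θ' → θ' ≤ r - 1 → I θ' ≤ I θ) (hnn : ∀ θ ≤ r - 1, 0 ≤ I θ)
    (hrt : rt ∈ Finset.Icc 1 r) (hθ₀ : θ₀ ≤ r - 1) :
    ∃ θ ∈ Finset.Icc (r - rt) (r - 1),
      (rt : ℝ) / ((r : ℝ) - θ) * I θ ≤ r / ((r : ℝ) - θ₀) * I θ₀ := by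
  obtain ⟨hrt1, hrtr⟩ := Finset.mem_Icc.mp hrt
  have hθ₀r : θ₀ < r := by omega
  by_cases hle : r - rt ≤ θ₀
  · refine ⟨θ₀, Finset.mem_Icc.mpr ⟨hle, hθ₀⟩, ?_⟩
    have hpos : (0 : ℝ) < r - θ₀ := sub_pos.mpr (by exact_mod_cast hθ₀r)
    have hrtr' : (rt : ℝ) ≤ r := by exact_mod_cast hrtr
    have := hnn θ₀ hθ₀
    gcongr
  · refine ⟨r - rt, Finset.mem_Icc.mpr ⟨le_rfl, by omega⟩, ?_⟩
    have hrt0 : (rt : ℝ) ≠ 0 := by positivity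
    rw [Nat.cast_sub hrtr, sub_sub_cancel, div_self hrt0, one_mul]
    calc I (r - rt) ≤ I θ₀ := hmono _ _ (by omega) (by omega)
      _ ≤ r / ((r : ℝ) - θ₀) * I θ₀ :=
        le_mul_of_one_le_left (hnn θ₀ hθ₀) (one_le_div_sub_of_lt hθ₀r)

theorem stmt_16 (r : ℕ) (hr : 0 < r) (I : ℕ → ℝ)
    (hmono : ∀ θ θ' : ℕ, θ ≤ θ' → θ' ≤ r - 1 → I θ' ≤ I θ)
    (hnn : ∀ θ ≤ r - 1, 0 ≤ I θ) :
    (⨆ rt : Finset.Icc 1 r, ⨅ θ : Finset.Icc (r - (rt : ℕ)) (r - 1),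
        ((rt : ℕ) : ℝ) / ((r : ℝ) - ((θ : ℕ) : ℝ)) * I θ) =
      ⨅ θ : Finset.Icc 0 (r - 1), ((r : ℝ) / ((r : ℝ) - ((θ : ℕ) : ℝ))) * I θ := by
  have hr_mem : r ∈ Finset.Icc 1 r := Finset.mem_Icc.mpr ⟨hr, le_rfl⟩
  have : Nonempty (Finset.Icc 1 r) := ⟨⟨r, hr_mem⟩⟩
  have (rt : Finset.Icc 1 r) : Nonempty (Finset.Icc (r - rt) (r - 1)) :=
    ⟨⟨r - 1, Finset.mem_Icc.mpr ⟨by grind, le_rfl⟩⟩⟩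
  have : Nonempty (Finset.Icc 0 (r - 1)) := ⟨⟨0, by simp⟩⟩
  apply le_antisymm
  · refine ciSup_le fun rt => le_ciInf fun θ₀ => ?_
    obtain ⟨θ, hθ, hle⟩ := exists_mem_Icc_div_sub_mul_le hmono hnn rt.2
      (Finset.mem_Icc.mp θ₀.2).2
    exact (ciInf_le (Finite.bddBelow_range _) ⟨θ, hθ⟩).trans hle
  · refine le_ciSup_of_le (Finite.bddAbove_range _) ⟨r, hr_mem⟩ (le_ciInf fun θ => ?_)
    have hθ : (θ : ℕ) ∈ Finset.Icc 0 (r - 1) := by grind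
    exact ciInf_le (Finite.bddBelow_range _) (⟨θ, hθ⟩ : Finset.Icc 0 (r - 1))
end
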